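/- If V > 0 and −π/3 < ψ < π/3, then the layer potential V₊ attains its global maximum over ℝ² at the origin: for every r ∈ ℝ², V₊(r) ≤ 6V cos(ψ), with equality at r = 0. Equivalently, for all u, v ∈ ℝ, cos(u+ψ) + cos(v+ψ) + cos(u+v−ψ) ≤ 3 cos(ψ), with equality at u = v = 0; hence the minimum of −V₊ lies at the 1a Wyckoff position r = 0. -/
import Mathlib


open Real

noncomputable section

/-- Dot product on ℝ². -/
def dot2 (p q : ℝ × ℝ) : ℝ := p.1 * q.1 + p.2 * q.2

/-- The first-shell moiré reciprocal vectors b₁ = k_θ(1,0), b₂ = R b₁, b₃ = R b₂. -/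
def bv (kθ : ℝ) : Fin 3 → ℝ × ℝ
  | 0 => (kθ, 0)
  | 1 => (-(kθ / 2), kθ * Real.sqrt 3 / 2)
  | 2 => (-(kθ / 2), -(kθ * Real.sqrt 3 / 2))

/-- Top-layer moiré potential V₊(r) = 2V ∑ₙ cos(bₙ·r + ψ). -/
def Vtop (kθ V ψ : ℝ) (r : ℝ × ℝ) : ℝ :=
  2 * V * ∑ n : Fin 3, Real.cos (dot2 (bv kθ n) r + ψ)

/-- The moiré lattice vector a₁ = (2π/k_θ)(1, 1/√3). -/
def av₁ (kθ : ℝ) : ℝ × ℝ := (2 * Real.pi / kθ, 2 * Real.pi / (kθ * Real.sqrt 3))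

/-- The moiré lattice vector a₂ = (2π/k_θ)(0, 2/√3). -/
def av₂ (kθ : ℝ) : ℝ × ℝ := (0, 4 * Real.pi / (kθ * Real.sqrt 3))

end

lemma polyA (x y : ℝ) (hx : x^2 ≤ 1) (hy : y^2 ≤ 1) :
    (x - y)^2 * (1 - y^2) ≤ 27/16 := by
  nlinarith [sq_nonneg (2*y+1), sq_nonneg (2*y-1), sq_nonneg (x+2*y), sq_nonneg (x-2*y),
    mul_nonneg (sub_nonneg.2 hx) (sub_nonneg.2 hy), sq_nonneg (x*y), sq_nonneg (x+y),
    sq_nonneg (x - y), mul_nonneg (sub_nonneg.2 hx) (sq_nonneg (2*y+1)),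
    mul_nonneg (sub_nonneg.2 hx) (sq_nonneg (2*y-1)),
    mul_nonneg (sub_nonneg.2 hy) (sq_nonneg (2*y+1)),
    mul_nonneg (sub_nonneg.2 hy) (sq_nonneg (2*y-1))]

lemma amgmC (x y z : ℝ) (hx : 0 ≤ x) (hy : 0 ≤ y) (hz : 0 ≤ z)
    (h : x * y * z ≤ 27/64) : 12 * (x*y*z) ≤ (x+y+z)^2 := by
  rcases le_or_gt (x+y+z) (9/4) with h1 | h1
  · have cube : 27*(x*y*z) ≤ (x+y+z)^3 := by
      nlinarith [sq_nonneg (x-y), sq_nonneg (y-z), sq_nonneg (x-z),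
        mul_nonneg hx hy, mul_nonneg hy hz, mul_nonneg hx hz,
        mul_nonneg (mul_nonneg hx hy) hz,
        mul_nonneg hx (sq_nonneg (y-z)), mul_nonneg hy (sq_nonneg (x-z)),
        mul_nonneg hz (sq_nonneg (x-y))]
    nlinarith [cube, sq_nonneg (x+y+z), mul_nonneg (mul_nonneg hx hy) hz]
  · nlinarith [h, sq_nonneg (x+y+z)]

/-- Algebraic core: on the torus (a1,b1),(a2,b2) on unit circles, with |s| ≤ √3 c,
the combination 2c·S + 4s·T is nonnegative. -/
lemma core (a1 b1 a2 b2 s c : ℝ) (hp : a1^2 + b1^2 = 1) (hq : a2^2 + b2^2 = 1)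
    (hcpos : 0 < c) (hs2 : s^2 ≤ 3*c^2) :
    0 ≤ 2*c*(a1^2 + a2^2 + (a1*b2 + b1*a2)^2) + 4*s*(a1*a2*(a1*b2 + b1*a2)) := by
  set S : ℝ := a1^2 + a2^2 + (a1*b2 + b1*a2)^2 with hS
  set T : ℝ := a1*a2*(a1*b2 + b1*a2) with hT
  have hX : (b1*b2 + a1*a2)^2 ≤ 1 := by nlinarith [sq_nonneg (a1*b2 - b1*a2)]
  have hY : (b1*b2 - a1*a2)^2 ≤ 1 := by nlinarith [sq_nonneg (a1*b2 + b1*a2)]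
  have hT2 : T^2 ≤ 27/64 := by
    have h1 := polyA (b1*b2 + a1*a2) (b1*b2 - a1*a2) hX hY
    have h2 : T^2 = ((b1*b2 + a1*a2) - (b1*b2 - a1*a2))^2 * (1 - (b1*b2 - a1*a2)^2) / 4 := by
      rw [hT]
      linear_combination (a1^2*a2^2*b2^2 + a1^2*a2^4) * hp + (a1^2*a2^2) * hq
    linarith
  have hS2 : 12 * T^2 ≤ S^2 := by
    have h3 : a1^2 * a2^2 * (a1*b2 + b1*a2)^2 ≤ 27/64 := by
      have : a1^2 * a2^2 * (a1*b2 + b1*a2)^2 = T^2 := by rw [hT]; ring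
      linarith [this ▸ hT2]
    have := amgmC (a1^2) (a2^2) ((a1*b2 + b1*a2)^2) (sq_nonneg _) (sq_nonneg _) (sq_nonneg _) h3
    have h4 : 12 * T^2 = 12 * (a1^2 * a2^2 * (a1*b2 + b1*a2)^2) := by rw [hT]; ring
    rw [h4, hS]
    exact this
  have hSnn : 0 ≤ S := by positivity
  rcases le_or_gt 0 (s*T) with h | h
  · nlinarith [mul_nonneg hcpos.le hSnn]
  · nlinarith [mul_le_mul_of_nonneg_left hS2 (sq_nonneg c),
      mul_pos (mul_pos hcpos hcpos) (mul_pos_of_neg_of_neg h h),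
      mul_nonneg hcpos.le hSnn]

lemma keyIneq (ψ : ℝ) (hcψ : 1/2 < Real.cos ψ) (u v : ℝ) :
    Real.cos (u + ψ) + Real.cos (v + ψ) + Real.cos (u + v - ψ) ≤ 3 * Real.cos ψ := by
  have hp : Real.sin (u/2)^2 + Real.cos (u/2)^2 = 1 := Real.sin_sq_add_cos_sq _
  have hq : Real.sin (v/2)^2 + Real.cos (v/2)^2 = 1 := Real.sin_sq_add_cos_sq _
  have hpy : Real.sin ψ ^2 + Real.cos ψ ^2 = 1 := Real.sin_sq_add_cos_sq _
  have hcpos : (0:ℝ) < Real.cos ψ := by linarith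
  have hs2 : Real.sin ψ ^2 ≤ 3 * Real.cos ψ ^2 := by nlinarith
  have hcore := core (Real.sin (u/2)) (Real.cos (u/2)) (Real.sin (v/2)) (Real.cos (v/2))
    (Real.sin ψ) (Real.cos ψ) hp hq hcpos hs2
  have ecu : Real.cos u = Real.cos (u/2)^2 - Real.sin (u/2)^2 := by
    rw [show u = u/2 + u/2 by ring, Real.cos_add]; ring
  have esu : Real.sin u = 2*Real.sin (u/2)*Real.cos (u/2) := by
    rw [show u = u/2 + u/2 by ring, Real.sin_add]; ring
  have ecv : Real.cos v = Real.cos (v/2)^2 - Real.sin (v/2)^2 := by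
    rw [show v = v/2 + v/2 by ring, Real.cos_add]; ring
  have esv : Real.sin v = 2*Real.sin (v/2)*Real.cos (v/2) := by
    rw [show v = v/2 + v/2 by ring, Real.sin_add]; ring
  have ecuv : Real.cos (u+v) = (Real.cos (u/2)*Real.cos (v/2) - Real.sin (u/2)*Real.sin (v/2))^2
      - (Real.sin (u/2)*Real.cos (v/2) + Real.cos (u/2)*Real.sin (v/2))^2 := by
    rw [show u + v = (u/2+v/2) + (u/2+v/2) by ring, Real.cos_add, Real.cos_add, Real.sin_add]
    ring
  have esuv : Real.sin (u+v) = 2*(Real.sin (u/2)*Real.cos (v/2) + Real.cos (u/2)*Real.sin (v/2))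
      * (Real.cos (u/2)*Real.cos (v/2) - Real.sin (u/2)*Real.sin (v/2)) := by
    rw [show u + v = (u/2+v/2) + (u/2+v/2) by ring, Real.sin_add, Real.cos_add, Real.sin_add]
    ring
  have hid : Real.cos (u + ψ) + Real.cos (v + ψ) + Real.cos (u + v - ψ)
      = 3*Real.cos ψ - (2*Real.cos ψ*(Real.sin (u/2)^2 + Real.sin (v/2)^2
          + (Real.sin (u/2)*Real.cos (v/2) + Real.cos (u/2)*Real.sin (v/2))^2)
        + 4*Real.sin ψ*(Real.sin (u/2)*Real.sin (v/2)
          * (Real.sin (u/2)*Real.cos (v/2) + Real.cos (u/2)*Real.sin (v/2)))) := by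
    rw [Real.cos_add, Real.cos_add, Real.cos_sub, ecu, esu, ecv, esv, ecuv, esuv]
    linear_combination (Real.cos ψ + Real.cos (v/2)^2*Real.cos ψ
        + 2*Real.sin (v/2)*Real.cos (v/2)*Real.sin ψ + Real.sin (v/2)^2*Real.cos ψ) * hp
      + (2*Real.cos ψ + 2*Real.sin (u/2)*Real.cos (u/2)*Real.sin ψ) * hq
  rw [hid]
  linarith [hcore]

/-- For V > 0 and −π/3 < ψ < π/3, the layer potential V₊ attains its global maximum at the
origin: V₊(r) ≤ 6V cos ψ with equality at r = 0. Equivalently,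
cos(u+ψ)+cos(v+ψ)+cos(u+v−ψ) ≤ 3cos ψ with equality at u = v = 0. -/
theorem Vtop_max_at_origin (kθ V ψ : ℝ) (hkθ : 0 < kθ) (hV : 0 < V)
    (hψ₁ : -(Real.pi / 3) < ψ) (hψ₂ : ψ < Real.pi / 3) :
    (∀ r : ℝ × ℝ, Vtop kθ V ψ r ≤ 6 * V * Real.cos ψ) ∧
    Vtop kθ V ψ 0 = 6 * V * Real.cos ψ ∧
    (∀ u v : ℝ,
      Real.cos (u + ψ) + Real.cos (v + ψ) + Real.cos (u + v - ψ) ≤ 3 * Real.cos ψ) ∧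
    Real.cos (0 + ψ) + Real.cos (0 + ψ) + Real.cos (0 + 0 - ψ) = 3 * Real.cos ψ := by
  have hcψ : 1/2 < Real.cos ψ := by
    have habs : |ψ| < Real.pi / 3 := abs_lt.2 ⟨hψ₁, hψ₂⟩
    have h1 : Real.cos (Real.pi / 3) < Real.cos |ψ| :=
      Real.cos_lt_cos_of_nonneg_of_le_pi (abs_nonneg ψ)
        (by linarith [Real.pi_pos]) habs
    rwa [Real.cos_pi_div_three, Real.cos_abs] at h1
  refine ⟨?_, ?_, fun u v => keyIneq ψ hcψ u v, ?_⟩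
  · intro r
    have hsum : Vtop kθ V ψ r
        = 2 * V * (Real.cos (kθ * r.1 + ψ)
          + Real.cos ((-(kθ/2) * r.1 + kθ * Real.sqrt 3 / 2 * r.2) + ψ)
          + Real.cos (kθ * r.1 + (-(kθ/2) * r.1 + kθ * Real.sqrt 3 / 2 * r.2) - ψ)) := by
      have h3 : dot2 (bv kθ 2) r + ψ
          = -(kθ * r.1 + (-(kθ/2) * r.1 + kθ * Real.sqrt 3 / 2 * r.2) - ψ) := by
        simp only [dot2, bv]; ring
      rw [Vtop, Fin.sum_univ_three, h3, Real.cos_neg]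
      have h1 : dot2 (bv kθ 0) r = kθ * r.1 := by simp [dot2, bv]
      have h2 : dot2 (bv kθ 1) r = -(kθ/2) * r.1 + kθ * Real.sqrt 3 / 2 * r.2 := by
        simp only [dot2, bv]
      rw [h1, h2]
    rw [hsum]
    have hk := keyIneq ψ hcψ (kθ * r.1) (-(kθ/2) * r.1 + kθ * Real.sqrt 3 / 2 * r.2)
    nlinarith [hk, hV]
  · have h0 : ∀ n : Fin 3, dot2 (bv kθ n) (0 : ℝ × ℝ) = 0 := by
      intro n
      fin_cases n <;> simp [dot2, bv]
    rw [Vtop, Fin.sum_univ_three, h0 0, h0 1, h0 2]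
    ring
  · rw [show (0:ℝ) + 0 - ψ = -ψ by ring, Real.cos_neg, zero_add]
    ring
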